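/- Let W be a finite real reflection group with Coxeter element γ and natural edge labeling λ(u,v) = u⁻¹v on NC_W(γ), with labels in T totally ordered arbitrarily. Then every non-singleton interval [u, v] of NC_W(γ) has a unique lexicographically smallest maximal chain, and this chain is rising with respect to λ. -/

import Mathlib

/-!
Translating by `x` sends the interval `[1, x⁻¹ z]` of the absolute order into `[x, z]`, so
the covering relations of `[x, z]` are the steps `y ⋖ y t` with `t` a reflection, and every
interval has maximal chains. There are finitely many of them, and a chain is determined by its
bottom element and its labels, so the lexicographically smallest chain exists and is unique.

It is rising because its tail is again lexicographically smallest, while at its first two steps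
`x ⋖ y ⋖ z` the rank-two interval `[x, z]` has, for every factorization `x⁻¹ z = t t'` into
two reflections, the chain with labels `t, t'`. These factorizations are closed under
`t ↦ t' = t⁻¹ x⁻¹ z`, so for the smallest possible first label `t` the second label `t'` is
larger, and minimality forces `x⁻¹ y = t`.
-/

open scoped RealInnerProductSpace
open Module

noncomputable section

variable {V : Type*} [NormedAddCommGroup V] [InnerProductSpace ℝ V]

/-- `g` acts as the orthogonal reflection in the hyperplane orthogonal to `α`. -/
def reflFormula (α : V) (g : V ≃ₗᵢ[ℝ] V) : Prop :=
  ∀ v, g v = v - (2 * ⟪α, v⟫ / ⟪α, α⟫) • α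

/-- `g` is an orthogonal reflection. -/
def IsReflection (g : V ≃ₗᵢ[ℝ] V) : Prop :=
  ∃ α : V, α ≠ 0 ∧ reflFormula α g

/-- A finite real reflection group: a finite subgroup of the orthogonal group
generated by its reflections. -/
def IsReflectionGroup (W : Subgroup (V ≃ₗᵢ[ℝ] V)) : Prop :=
  Finite W ∧ Subgroup.closure {g | g ∈ W ∧ IsReflection g} = W

/-- Reflection length: the least `k` such that `w` is a product of `k` reflections. -/
def refLen (W : Subgroup (V ≃ₗᵢ[ℝ] V)) (w : W) : ℕ :=
  sInf {k | ∃ l : List W, l.length = k ∧ (∀ t ∈ l, IsReflection (t : W).1) ∧ l.prod = w}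

/-- The absolute order on `W`. -/
def absLe (W : Subgroup (V ≃ₗᵢ[ℝ] V)) (u v : W) : Prop :=
  refLen W u + refLen W (u⁻¹ * v) = refLen W v

/-- Covering relation of the absolute order. -/
def covers (W : Subgroup (V ≃ₗᵢ[ℝ] V)) (u v : W) : Prop :=
  absLe W u v ∧ u ≠ v ∧ ∀ z, absLe W u z → absLe W z v → z = u ∨ z = v

/-- The fixed subspace of an isometry. -/
def fixedSpace (g : V ≃ₗᵢ[ℝ] V) : Submodule ℝ V where
  carrier := {v | g v = v}
  add_mem' := by
    intro a b ha hb
    simp only [Set.mem_setOf_eq, map_add] at *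
    rw [ha, hb]
  zero_mem' := by simp
  smul_mem' := by
    intro c a ha
    simp only [Set.mem_setOf_eq, map_smul] at *
    rw [ha]

/-- A root system for the reflection group `W`. -/
def IsRootSystemFor (W : Subgroup (V ≃ₗᵢ[ℝ] V)) (Φ : Set V) : Prop :=
  Φ.Finite ∧ (∀ α ∈ Φ, α ≠ 0) ∧ (∀ α ∈ Φ, -α ∈ Φ) ∧
  (∀ α ∈ Φ, ∀ c : ℝ, c • α ∈ Φ → c = 1 ∨ c = -1) ∧
  (∀ α ∈ Φ, ∃ t ∈ W, reflFormula α t) ∧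
  (∀ t ∈ W, IsReflection t → ∃ α ∈ Φ, reflFormula α t) ∧
  (∀ g ∈ W, ∀ α ∈ Φ, g α ∈ Φ)

/-- A simple system for `Φ`: roots `σ 1, …, σ ℓ` which are linearly independent and
such that every root is a nonnegative or nonpositive combination of them. -/
def IsSimpleSystem (Φ : Set V) {ℓ : ℕ} (σ : Fin ℓ → V) : Prop :=
  (∀ i, σ i ∈ Φ) ∧ LinearIndependent ℝ σ ∧
  ∀ α ∈ Φ, (∃ c : Fin ℓ → ℝ, (∀ i, 0 ≤ c i) ∧ α = ∑ i, c i • σ i) ∨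
           (∃ c : Fin ℓ → ℝ, (∀ i, 0 ≤ c i) ∧ -α = ∑ i, c i • σ i)

/-- `γ` is a Coxeter element of `W`: a product, in some order, of the reflections in
the `ℓ` simple roots of some simple system of the root system `Φ`. -/
def IsCoxeterElement (W : Subgroup (V ≃ₗᵢ[ℝ] V)) (Φ : Set V) (ℓ : ℕ) (γ : W) : Prop :=
  ∃ σ : Fin ℓ → V, IsSimpleSystem Φ σ ∧
    ∃ t : Fin ℓ → W, (∀ i, reflFormula (σ i) (t i).1) ∧
      ∃ l : List (Fin ℓ), l.Nodup ∧ (∀ i, i ∈ l) ∧ (l.map t).prod = γ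

/-- `l` is a maximal (saturated) chain from `u` to `v` in the absolute order. -/
def IsMaximalChain (W : Subgroup (V ≃ₗᵢ[ℝ] V)) (u v : W) (l : List W) : Prop :=
  l.head? = some u ∧ l.getLast? = some v ∧ l.Chain' (covers W)

/-- The label of a chain under the natural edge labeling `λ (x, y) = x⁻¹ * y`. -/
def chainLabels (W : Subgroup (V ≃ₗᵢ[ℝ] V)) (l : List W) : List W :=
  l.zipWith (fun x y => x⁻¹ * y) l.tail

end

section Reflection

variable {V : Type*} [NormedAddCommGroup V] [InnerProductSpace ℝ V]

theorem IsReflection.mul_self {g : V ≃ₗᵢ[ℝ] V} (h : IsReflection g) : g * g = 1 := by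
  obtain ⟨α, hα, hg⟩ := h
  have hαα : ⟪α, α⟫ ≠ 0 := inner_self_ne_zero.mpr hα
  have hinner : ∀ v, ⟪α, g v⟫ = -⟪α, v⟫ := fun v => by
    rw [hg v, inner_sub_right, real_inner_smul_right]
    field_simp
    ring
  ext v
  change g (g v) = v
  rw [hg (g v), hinner, hg v, mul_neg, neg_div, neg_smul, sub_neg_eq_add, sub_add_cancel]

theorem IsReflection.inv_eq {g : V ≃ₗᵢ[ℝ] V} (h : IsReflection g) : g⁻¹ = g :=
  inv_eq_of_mul_eq_one_right h.mul_self

theorem IsReflection.of_inv {g : V ≃ₗᵢ[ℝ] V} (h : IsReflection g⁻¹) : IsReflection g := by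
  have hg : g = g⁻¹ := by simpa using h.inv_eq
  rw [hg]
  exact h

theorem IsReflection.ne_one {g : V ≃ₗᵢ[ℝ] V} (h : IsReflection g) : g ≠ 1 := by
  rintro rfl
  obtain ⟨α, hα, hg⟩ := h
  have hαα : ⟪α, α⟫ ≠ 0 := inner_self_ne_zero.mpr hα
  have := hg α
  rw [mul_div_assoc, div_self hαα, mul_one, LinearIsometryEquiv.coe_one, id_eq,
    eq_sub_iff_add_eq, add_eq_left, smul_eq_zero] at this
  exact hα (this.resolve_left two_ne_zero)

theorem IsReflection.conj {t : V ≃ₗᵢ[ℝ] V} (h : IsReflection t) (g : V ≃ₗᵢ[ℝ] V) :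
    IsReflection (g * t * g⁻¹) := by
  obtain ⟨α, hα, ht⟩ := h
  have hinner : ∀ v, ⟪g α, v⟫ = ⟪α, g.symm v⟫ := fun v => by
    rw [← g.inner_map_map α (g.symm v), g.apply_symm_apply]
  refine ⟨g α, by simpa using hα, fun v => ?_⟩
  calc (g * t * g⁻¹) v = g (t (g.symm v)) := rfl
    _ = v - (2 * ⟪g α, v⟫ / ⟪g α, g α⟫) • g α := by
      rw [ht, map_sub, map_smul, g.apply_symm_apply, hinner, g.inner_map_map]

end Reflection

section General

theorem Set.Finite.exists_forall_rel_of_total {α : Type*} {q : α → α → Prop}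
    [IsStrictOrder α q] {s : Set α} (hs : s.Finite) (hne : s.Nonempty)
    (htot : ∀ a ∈ s, ∀ b ∈ s, a ≠ b → q a b ∨ q b a) :
    ∃ m ∈ s, ∀ b ∈ s, b ≠ m → q m b := by
  obtain ⟨m, hm, hmin⟩ :=
    (Set.wellFoundedOn_iff.mp (hs.wellFoundedOn (r := q))).has_min s hne
  exact ⟨m, hm, fun b hb hbm =>
    (htot m hm b hb hbm.symm).resolve_right fun h => hmin b hb ⟨h, hb, hm⟩⟩

theorem List.lex_or_lex_of_ne {α : Type*} {r : α → α → Prop} {s : Set α}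
    (htot : ∀ a ∈ s, ∀ b ∈ s, a ≠ b → r a b ∨ r b a) :
    ∀ {l₁ l₂ : List α}, (∀ a ∈ l₁, a ∈ s) → (∀ a ∈ l₂, a ∈ s) → l₁ ≠ l₂ →
      Lex r l₁ l₂ ∨ Lex r l₂ l₁
  | [], [], _, _, h => absurd rfl h
  | [], _ :: _, _, _, _ => .inl .nil
  | _ :: _, [], _, _, _ => .inr .nil
  | a :: l₁, b :: l₂, h₁, h₂, hne => by
    by_cases hab : a = b
    · subst hab
      exact (lex_or_lex_of_ne htot (fun c hc => h₁ c (mem_cons_of_mem a hc))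
        (fun c hc => h₂ c (mem_cons_of_mem a hc)) (fun h => hne (h ▸ rfl))).imp .cons .cons
    · exact (htot a (h₁ a mem_cons_self) b (h₂ b mem_cons_self) hab).imp .rel .rel

end General

section ReflectionLength

variable {V : Type*} [NormedAddCommGroup V] [InnerProductSpace ℝ V]
  {W : Subgroup (V ≃ₗᵢ[ℝ] V)}

theorem exists_reflection_factorization (hW : IsReflectionGroup W) (w : W) :
    ∃ l : List W, (∀ t ∈ l, IsReflection t.1) ∧ l.prod = w := by
  obtain ⟨-, hgen⟩ := hW
  revert w
  rw [← hgen]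
  intro w
  have hw : w ∈ Submonoid.closure (Subgroup.subtype _ ⁻¹' {g | g ∈ W ∧ IsReflection g} ∪
      (Subgroup.subtype _ ⁻¹' {g | g ∈ W ∧ IsReflection g})⁻¹) := by
    rw [← Subgroup.closure_toSubmonoid, Subgroup.closure_preimage_eq_top]
    trivial
  obtain ⟨l, hl, rfl⟩ := Submonoid.exists_list_of_mem_closure hw
  refine ⟨l, fun t ht => ?_, rfl⟩
  rcases hl t ht with ⟨-, h⟩ | ⟨-, h⟩
  · exact h
  · exact h.of_inv

theorem exists_factorization_length_eq_refLen (hW : IsReflectionGroup W) (w : W) :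
    ∃ l : List W, l.length = refLen W w ∧ (∀ t ∈ l, IsReflection t.1) ∧ l.prod = w := by
  obtain ⟨l, hl, hw⟩ := exists_reflection_factorization hW w
  exact Nat.sInf_mem (s := {k | ∃ l : List W, l.length = k ∧ (∀ t ∈ l, IsReflection t.1) ∧
    l.prod = w}) ⟨_, l, rfl, hl, hw⟩

theorem refLen_le_length {w : W} {l : List W} (hl : ∀ t ∈ l, IsReflection t.1)
    (hw : l.prod = w) : refLen W w ≤ l.length :=
  Nat.sInf_le ⟨l, rfl, hl, hw⟩

theorem refLen_one : refLen W 1 = 0 :=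
  Nat.eq_zero_of_le_zero (refLen_le_length (l := []) (by simp) rfl)

theorem refLen_le_one {t : W} (ht : IsReflection t.1) : refLen W t ≤ 1 :=
  refLen_le_length (l := [t]) (by simpa using ht) (by simp)

theorem refLen_eq_zero_iff (hW : IsReflectionGroup W) {w : W} : refLen W w = 0 ↔ w = 1 := by
  refine ⟨fun h => ?_, fun h => h ▸ refLen_one⟩
  obtain ⟨l, hl, -, rfl⟩ := exists_factorization_length_eq_refLen hW w
  rw [List.length_eq_zero_iff.mp (hl.trans h), List.prod_nil]

theorem refLen_of_isReflection (hW : IsReflectionGroup W) {t : W} (ht : IsReflection t.1) :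
    refLen W t = 1 := by
  have h0 : refLen W t ≠ 0 := fun h =>
    ht.ne_one (congrArg Subtype.val ((refLen_eq_zero_iff hW).mp h))
  have := refLen_le_one ht
  omega

theorem refLen_mul_le (hW : IsReflectionGroup W) (a b : W) :
    refLen W (a * b) ≤ refLen W a + refLen W b := by
  obtain ⟨la, hla, ha, rfl⟩ := exists_factorization_length_eq_refLen hW a
  obtain ⟨lb, hlb, hb, rfl⟩ := exists_factorization_length_eq_refLen hW b
  rw [← hla, ← hlb, ← List.length_append, ← List.prod_append]
  exact refLen_le_length (fun t ht => (List.mem_append.mp ht).elim (ha t) (hb t)) rfl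

end ReflectionLength

section AbsoluteOrder

variable {V : Type*} [NormedAddCommGroup V] [InnerProductSpace ℝ V]
  {W : Subgroup (V ≃ₗᵢ[ℝ] V)}

theorem absLe_of_refLen_add_le (hW : IsReflectionGroup W) {a w : W}
    (h : refLen W a + refLen W (a⁻¹ * w) ≤ refLen W w) : absLe W a w :=
  le_antisymm h (by simpa using refLen_mul_le hW a (a⁻¹ * w))

theorem absLe_mul_of_absLe_inv_mul (hW : IsReflectionGroup W) {x z a : W}
    (hxz : absLe W x z) (ha : absLe W a (x⁻¹ * z)) :
    absLe W x (x * a) ∧ absLe W (x * a) z := by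
  have e : (x * a)⁻¹ * z = a⁻¹ * (x⁻¹ * z) := by group
  have h₁ := refLen_mul_le hW x a
  have h₂ := refLen_mul_le hW (x * a) ((x * a)⁻¹ * z)
  rw [mul_inv_cancel_left, e] at h₂
  unfold absLe at *
  rw [inv_mul_cancel_left, e]
  omega

theorem exists_isReflection_absLe (hW : IsReflectionGroup W) {w : W} (hw : w ≠ 1) :
    ∃ t : W, IsReflection t.1 ∧ absLe W t w := by
  obtain ⟨_ | ⟨t, l⟩, hlen, hl, rfl⟩ := exists_factorization_length_eq_refLen hW w
  · exact absurd List.prod_nil hw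
  have ht : IsReflection t.1 := hl t List.mem_cons_self
  have hrest : refLen W (t⁻¹ * (t :: l).prod) ≤ l.length :=
    refLen_le_length (fun s hs => hl s (List.mem_cons_of_mem t hs)) (by simp)
  have := refLen_le_one ht
  rw [List.length_cons] at hlen
  exact ⟨t, ht, absLe_of_refLen_add_le hW (by omega)⟩

theorem covers_iff (hW : IsReflectionGroup W) {x y : W} :
    covers W x y ↔ absLe W x y ∧ IsReflection (x⁻¹ * y).1 := by
  constructor
  · rintro ⟨hxy, hne, hmax⟩
    obtain ⟨t, ht, htw⟩ := exists_isReflection_absLe hW fun h => hne (inv_mul_eq_one.mp h)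
    obtain ⟨hxt, hty⟩ := absLe_mul_of_absLe_inv_mul hW hxy htw
    refine ⟨hxy, (hmax (x * t) hxt hty).elim (fun h => ?_) (fun h => ?_)⟩
    · exact absurd (congrArg Subtype.val (mul_eq_left.mp h)) ht.ne_one
    · rwa [← h, inv_mul_cancel_left]
  · rintro ⟨hxy, ht⟩
    refine ⟨hxy, fun h => ht.ne_one (by rw [h, inv_mul_cancel]; rfl), fun z hxz hzy => ?_⟩
    have h₁ := refLen_of_isReflection hW ht
    unfold absLe at hxy hxz hzy
    have : refLen W (x⁻¹ * z) = 0 ∨ refLen W (z⁻¹ * y) = 0 := by omega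
    refine this.imp (fun h => ?_) (fun h => ?_)
    · exact (inv_mul_eq_one.mp ((refLen_eq_zero_iff hW).mp h)).symm
    · exact inv_mul_eq_one.mp ((refLen_eq_zero_iff hW).mp h)

theorem covers.refLen_eq (hW : IsReflectionGroup W) {x y : W} (h : covers W x y) :
    refLen W y = refLen W x + 1 := by
  obtain ⟨hxy, ht⟩ := (covers_iff hW).mp h
  rw [← hxy, refLen_of_isReflection hW ht]

theorem exists_covers_absLe (hW : IsReflectionGroup W) {u v : W} (h : absLe W u v)
    (hne : u ≠ v) : ∃ y, covers W u y ∧ absLe W y v := by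
  obtain ⟨t, ht, htw⟩ := exists_isReflection_absLe hW fun h => hne (inv_mul_eq_one.mp h)
  obtain ⟨hut, htv⟩ := absLe_mul_of_absLe_inv_mul hW h htw
  exact ⟨u * t, (covers_iff hW).mpr ⟨hut, by rwa [inv_mul_cancel_left]⟩, htv⟩

theorem absLe_and_refLen_eq_two_of_covers (hW : IsReflectionGroup W) {x y z : W}
    (hxy : covers W x y) (hyz : covers W y z) :
    absLe W x z ∧ refLen W (x⁻¹ * z) = 2 := by
  have h₁ := hxy.refLen_eq hW
  have h₂ := hyz.refLen_eq hW
  have h₃ := refLen_mul_le hW (x⁻¹ * y) (y⁻¹ * z)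
  rw [show x⁻¹ * y * (y⁻¹ * z) = x⁻¹ * z by group,
    refLen_of_isReflection hW ((covers_iff hW).mp hxy).2,
    refLen_of_isReflection hW ((covers_iff hW).mp hyz).2] at h₃
  have h₄ := refLen_mul_le hW x (x⁻¹ * z)
  rw [mul_inv_cancel_left] at h₄
  have h₅ : refLen W (x⁻¹ * z) = 2 := by omega
  exact ⟨by unfold absLe; omega, h₅⟩

theorem covers_mul_and_covers_of_refLen_eq_two (hW : IsReflectionGroup W) {x z t : W}
    (hxz : absLe W x z) (h2 : refLen W (x⁻¹ * z) = 2) (ht : IsReflection t.1)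
    (ht' : IsReflection (t⁻¹ * (x⁻¹ * z)).1) : covers W x (x * t) ∧ covers W (x * t) z := by
  have htw : absLe W t (x⁻¹ * z) := by
    have := refLen_le_one ht
    have := refLen_le_one ht'
    exact absLe_of_refLen_add_le hW (by omega)
  obtain ⟨h₁, h₂⟩ := absLe_mul_of_absLe_inv_mul hW hxz htw
  refine ⟨(covers_iff hW).mpr ⟨h₁, ?_⟩, (covers_iff hW).mpr ⟨h₂, ?_⟩⟩
  · rwa [inv_mul_cancel_left]
  · rwa [mul_inv_rev, mul_assoc]

end AbsoluteOrder

section MaximalChains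

variable {V : Type*} [NormedAddCommGroup V] [InnerProductSpace ℝ V]
  {W : Subgroup (V ≃ₗᵢ[ℝ] V)}

theorem IsMaximalChain.exists_eq_cons {u v : W} {l : List W} (h : IsMaximalChain W u v l) :
    ∃ p, l = u :: p :=
  List.head?_eq_some_iff.mp h.1

theorem isMaximalChain_cons_cons {x y v : W} {p : List W} :
    IsMaximalChain W x v (x :: y :: p) ↔ covers W x y ∧ IsMaximalChain W y v (y :: p) := by
  unfold IsMaximalChain
  rw [List.getLast?_cons_cons]
  exact ⟨fun ⟨_, hl, hc⟩ => ⟨(List.isChain_cons_cons.mp hc).1, rfl, hl,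
      (List.isChain_cons_cons.mp hc).2⟩,
    fun ⟨hxy, _, hl, hc⟩ => ⟨rfl, hl, hc.cons_cons hxy⟩⟩

theorem exists_isMaximalChain (hW : IsReflectionGroup W) {u v : W} (h : absLe W u v) :
    ∃ l, IsMaximalChain W u v l := by
  obtain ⟨k, hk⟩ : ∃ k, refLen W v - refLen W u = k := ⟨_, rfl⟩
  induction k generalizing u with
  | zero =>
    obtain rfl : u = v := by
      unfold absLe at h
      exact inv_mul_eq_one.mp ((refLen_eq_zero_iff hW).mp (by omega))
    exact ⟨[u], rfl, rfl, List.isChain_singleton u⟩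
  | succ k ih =>
    obtain ⟨y, huy, hyv⟩ := exists_covers_absLe hW h (by rintro rfl; omega)
    obtain ⟨l, hl⟩ := ih hyv (by have := huy.refLen_eq hW; omega)
    obtain ⟨p, rfl⟩ := hl.exists_eq_cons
    exact ⟨u :: y :: p, isMaximalChain_cons_cons.mpr ⟨huy, hl⟩⟩

theorem setOf_isMaximalChain_finite (hW : IsReflectionGroup W) (u v : W) :
    {l | IsMaximalChain W u v l}.Finite := by
  have := hW.1
  have := Fintype.ofFinite W
  refine (List.finite_length_le W (Fintype.card W)).subset fun l hl => ?_
  have hmono : (l.map (refLen W)).IsChain (· < ·) :=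
    (List.isChain_map _).mpr (hl.2.2.imp fun x y h => by rw [h.refLen_eq hW]; omega)
  exact (List.Nodup.of_map _ hmono.pairwise.nodup).length_le_card

@[simp]
theorem chainLabels_cons_cons (x y : W) (l : List W) :
    chainLabels W (x :: y :: l) = (x⁻¹ * y) :: chainLabels W (y :: l) :=
  rfl

theorem isReflection_of_mem_chainLabels (hW : IsReflectionGroup W) :
    ∀ {l : List W}, l.IsChain (covers W) → ∀ t ∈ chainLabels W l, IsReflection t.1
  | [], _, t, ht | [_], _, t, ht => by simp [chainLabels] at ht
  | x :: y :: l, hl, t, ht => by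
    rw [List.isChain_cons_cons] at hl
    rw [chainLabels_cons_cons, List.mem_cons] at ht
    rcases ht with rfl | ht
    · exact ((covers_iff hW).mp hl.1).2
    · exact isReflection_of_mem_chainLabels hW hl.2 t ht

theorem eq_of_head?_eq_of_chainLabels_eq :
    ∀ {l l' : List W}, l.head? = l'.head? → chainLabels W l = chainLabels W l' → l = l'
  | [], [], _, _ => rfl
  | [], _ :: _, h, _ | _ :: _, [], h, _ => by simp at h
  | [_], [_], h, _ => by simpa using h
  | [_], _ :: _ :: _, _, hl | _ :: _ :: _, [_], _, hl => by simp [chainLabels] at hl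
  | x :: y :: l, x' :: y' :: l', h, hl => by
    obtain rfl : x = x' := by simpa using h
    rw [chainLabels_cons_cons, chainLabels_cons_cons, List.cons.injEq, mul_right_inj] at hl
    obtain ⟨rfl, hl⟩ := hl
    exact congrArg (List.cons x) (eq_of_head?_eq_of_chainLabels_eq rfl hl)

end MaximalChains

section LexMinChain

variable {V : Type*} [NormedAddCommGroup V] [InnerProductSpace ℝ V]
  {W : Subgroup (V ≃ₗᵢ[ℝ] V)}

def IsTotalOnReflections (q : W → W → Prop) : Prop :=
  ∀ s t : W, IsReflection s.1 → IsReflection t.1 → s ≠ t → q s t ∨ q t s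

def IsLexMinChain (q : W → W → Prop) (u v : W) (m : List W) : Prop :=
  IsMaximalChain W u v m ∧
    ∀ l, IsMaximalChain W u v l → l ≠ m → List.Lex q (chainLabels W m) (chainLabels W l)

variable {q : W → W → Prop} [IsStrictOrder W q]

theorem exists_isLexMinChain (hW : IsReflectionGroup W) (htot : IsTotalOnReflections q)
    {u v : W} (h : absLe W u v) : ∃ m, IsLexMinChain q u v m := by
  have : IsStrictOrder (List W) fun l l' => List.Lex q (chainLabels W l) (chainLabels W l') :=
    { irrefl := fun l => List.lex_irrefl (irrefl_of q) _
      trans := fun _ _ _ => List.lex_trans (trans_of q) }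
  obtain ⟨m, hm, hmin⟩ := (setOf_isMaximalChain_finite hW u v).exists_forall_rel_of_total
    (exists_isMaximalChain hW h) fun l hl l' hl' hne =>
      List.lex_or_lex_of_ne (s := {t : W | IsReflection t.1}) (fun a ha b hb => htot a b ha hb)
        (isReflection_of_mem_chainLabels hW hl.2.2) (isReflection_of_mem_chainLabels hW hl'.2.2)
        fun h => hne (eq_of_head?_eq_of_chainLabels_eq (hl.1.trans hl'.1.symm) h)
  exact ⟨m, hm, hmin⟩

theorem IsLexMinChain.tail {x y v : W} {p : List W} (h : IsLexMinChain q x v (x :: y :: p)) :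
    IsLexMinChain q y v (y :: p) := by
  obtain ⟨hm, hmin⟩ := h
  obtain ⟨hxy, hyp⟩ := isMaximalChain_cons_cons.mp hm
  refine ⟨hyp, fun l hl hne => ?_⟩
  obtain ⟨p', rfl⟩ := hl.exists_eq_cons
  have := hmin (x :: y :: p') (isMaximalChain_cons_cons.mpr ⟨hxy, hl⟩) (by simpa using hne)
  rwa [chainLabels_cons_cons, chainLabels_cons_cons, List.lex_cons_iff] at this

theorem exists_rising_reflection_factorization [Finite W] (htot : IsTotalOnReflections q)
    {w : W} (hw : w ≠ 1) {a : W} (ha : IsReflection a.1) (ha' : IsReflection (a⁻¹ * w).1) :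
    ∃ t : W, IsReflection t.1 ∧ IsReflection (t⁻¹ * w).1 ∧ q t (t⁻¹ * w) ∧
      (t = a ∨ q t a) := by
  set F : Set W := {t | IsReflection t.1 ∧ IsReflection (t⁻¹ * w).1}
  have hF : ∀ t ∈ F, t⁻¹ * w ∈ F := fun t ht => ⟨ht.2, by
    rw [show (t⁻¹ * w)⁻¹ * w = w⁻¹ * t * w⁻¹⁻¹ by group]
    exact ht.1.conj (w⁻¹).1⟩
  obtain ⟨t, ht, hmin⟩ := F.toFinite.exists_forall_rel_of_total ⟨a, ha, ha'⟩
    fun s hs s' hs' => htot s s' hs.1 hs'.1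
  have hne : t⁻¹ * w ≠ t := fun h =>
    hw (by rw [← mul_inv_cancel_left t w, h]; exact Subtype.ext ht.1.mul_self)
  exact ⟨t, ht.1, ht.2, hmin _ (hF t ht) hne, (eq_or_ne a t).imp Eq.symm (hmin a ⟨ha, ha'⟩)⟩

theorem IsLexMinChain.rel_head (hW : IsReflectionGroup W) (htot : IsTotalOnReflections q)
    {x y z v : W} {p : List W} (h : IsLexMinChain q x v (x :: y :: z :: p)) :
    q (x⁻¹ * y) (y⁻¹ * z) := by
  have := hW.1
  obtain ⟨hm, hmin⟩ := h
  obtain ⟨hxy, hyzp⟩ := isMaximalChain_cons_cons.mp hm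
  obtain ⟨hyz, hzp⟩ := isMaximalChain_cons_cons.mp hyzp
  obtain ⟨hxz, h2⟩ := absLe_and_refLen_eq_two_of_covers hW hxy hyz
  have hw : x⁻¹ * z ≠ 1 := fun h => by rw [h, refLen_one] at h2; omega
  have hsplit : (x⁻¹ * y)⁻¹ * (x⁻¹ * z) = y⁻¹ * z := by group
  obtain ⟨t, ht, ht', hrise, rfl | hlt⟩ := exists_rising_reflection_factorization htot hw
    ((covers_iff hW).mp hxy).2 (by rw [hsplit]; exact ((covers_iff hW).mp hyz).2)
  · rwa [hsplit] at hrise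
  obtain ⟨hxt, htz⟩ := covers_mul_and_covers_of_refLen_eq_two hW hxz h2 ht ht'
  have hm' : IsMaximalChain W x v (x :: x * t :: z :: p) :=
    isMaximalChain_cons_cons.mpr ⟨hxt, isMaximalChain_cons_cons.mpr ⟨htz, hzp⟩⟩
  have hlt' : List.Lex q (chainLabels W (x :: x * t :: z :: p))
      (chainLabels W (x :: y :: z :: p)) := by
    rw [chainLabels_cons_cons, chainLabels_cons_cons, inv_mul_cancel_left]
    exact .rel hlt
  exact absurd (hmin _ hm' fun h => List.lex_irrefl (irrefl_of q) _ (h ▸ hlt'))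
    (List.lex_asymm (asymm_of q) hlt')

theorem IsLexMinChain.isChain_chainLabels (hW : IsReflectionGroup W)
    (htot : IsTotalOnReflections q) :
    ∀ {u v : W} {m : List W}, IsLexMinChain q u v m → (chainLabels W m).IsChain q
  | _, _, [], _ | _, _, [_], _ | _, _, [_, _], _ => by simp [chainLabels]
  | _, _, x :: y :: z :: p, h => by
    obtain rfl := Option.some.inj h.1.1
    rw [chainLabels_cons_cons, chainLabels_cons_cons, List.isChain_cons_cons,
      ← chainLabels_cons_cons]
    exact ⟨h.rel_head hW htot, h.tail.isChain_chainLabels hW htot⟩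

end LexMinChain

theorem statement19_general {V : Type*} [NormedAddCommGroup V] [InnerProductSpace ℝ V]
    (W : Subgroup (V ≃ₗᵢ[ℝ] V)) (hW : IsReflectionGroup W)
    (r : W → W → Prop)
    (hasymm : ∀ s t : W, IsReflection s.1 → IsReflection t.1 → r s t → ¬ r t s)
    (htrans : ∀ a b c : W, IsReflection a.1 → IsReflection b.1 → IsReflection c.1 →
      r a b → r b c → r a c)
    (htotal : ∀ s t : W, IsReflection s.1 → IsReflection t.1 → s ≠ t → r s t ∨ r t s)
    (u v : W) (huv : absLe W u v) :
    ∃ l : List W, IsMaximalChain W u v l ∧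
      (∀ l' : List W, IsMaximalChain W u v l' → l' ≠ l →
        List.Lex r (chainLabels W l) (chainLabels W l')) ∧
      (chainLabels W l).Pairwise r := by
  -- `r` is only an order on the reflections; restricted to them it is a strict order on `W`.
  let q : W → W → Prop := fun s t => IsReflection s.1 ∧ IsReflection t.1 ∧ r s t
  have : IsStrictOrder W q :=
    { irrefl := fun s h => hasymm s s h.1 h.1 h.2.2 h.2.2
      trans := fun a b c hab hbc =>
        ⟨hab.1, hbc.2.1, htrans a b c hab.1 hab.2.1 hbc.2.1 hab.2.2 hbc.2.2⟩ }
  have hqr : ∀ s t, q s t → r s t := fun _ _ h => h.2.2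
  have hqtot : IsTotalOnReflections q :=
    fun s t hs ht hst => (htotal s t hs ht hst).imp (⟨hs, ht, ·⟩) (⟨ht, hs, ·⟩)
  obtain ⟨m, hm, hmin⟩ := exists_isLexMinChain hW hqtot huv
  refine ⟨m, hm, fun l hl hne => (hmin l hl hne).imp hqr _ _, ?_⟩
  exact (IsLexMinChain.isChain_chainLabels hW hqtot ⟨hm, hmin⟩).pairwise.imp (hqr _ _)

/-- For any strict total order `r` on the set of reflections of `W` and any
non-singleton interval `[u, v]` of `NC_W(γ)`, there is a unique lexicographically
smallest maximal chain of `[u, v]` with respect to the natural edge labeling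
`λ (x, y) = x⁻¹ * y`, and this chain is rising. -/
theorem statement19 {V : Type*} [NormedAddCommGroup V] [InnerProductSpace ℝ V]
    [FiniteDimensional ℝ V]
    (W : Subgroup (V ≃ₗᵢ[ℝ] V)) (hW : IsReflectionGroup W)
    (Φ : Set V) (hΦ : IsRootSystemFor W Φ)
    (γ : W) (hγ : IsCoxeterElement W Φ (Module.finrank ℝ V) γ)
    (r : W → W → Prop)
    (hasymm : ∀ s t : W, IsReflection s.1 → IsReflection t.1 → r s t → ¬ r t s)
    (htrans : ∀ a b c : W, IsReflection a.1 → IsReflection b.1 → IsReflection c.1 →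
      r a b → r b c → r a c)
    (htotal : ∀ s t : W, IsReflection s.1 → IsReflection t.1 → s ≠ t → r s t ∨ r t s)
    (u v : W) (huv : absLe W u v) (hvγ : absLe W v γ) (hne : u ≠ v) :
    ∃ l : List W, IsMaximalChain W u v l ∧
      (∀ l' : List W, IsMaximalChain W u v l' → l' ≠ l →
        List.Lex r (chainLabels W l) (chainLabels W l')) ∧
      (chainLabels W l).Pairwise r :=
  statement19_general W hW r hasymm htrans htotal u v huv
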